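/- arXiv:2112.00449 — 3 statements merged into one kernel-verified Lean document; each statement's English description precedes it below -/
import Mathlib

section
/- Let q be a query with k ≥ 2 distinct data items in a conflict-free broadcast schedule. Then acc(q) = k − 1 if and only if all k items of q are placed on a single channel in k consecutive slots, i.e., there exist a channel c and a slot m such that the positions of the items of q are exactly (c, m), (c, m+1), …, (c, m+k−1). -/
/-!
Conflict-freeness forces two items in equal or adjacent slots onto the same channel. Hence the
`k` items of `q` occupy `k` distinct slots, whose spread `max - min` is `k - 1` exactly when they
fill an interval. Along such an interval, adjacent slots chain every item to one channel.
-/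

/-- The access time of a finite nonempty set `S` of data items under the slot
assignment `p`: maximum slot minus minimum slot over the items of `S`. -/
def accessTime {D : Type*} (p : D → ℕ) (S : Finset D) (h : S.Nonempty) : ℕ :=
  (S.image p).max' (h.image p) - (S.image p).min' (h.image p)

namespace Finset

theorem max'_sub_min'_eq_card_sub_one_iff (S : Finset ℕ) (hS : S.Nonempty) :
    S.max' hS - S.min' hS = #S - 1 ↔ ∃ m, S = Icc m (m + #S - 1) := by
  have hcard : 0 < #S := hS.card_pos
  constructor
  · intro h
    have hmin_le_max : S.min' hS ≤ S.max' hS := min'_le_max' S hS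
    refine ⟨S.min' hS, eq_of_subset_of_card_le (fun x hx ↦ ?_) ?_⟩
    · have := S.le_max' x hx
      exact mem_Icc.mpr ⟨S.min'_le x hx, by omega⟩
    · rw [Nat.card_Icc]
      omega
  · rintro ⟨m, hm⟩
    generalize #S = k at hm hcard ⊢
    have hmax : S.max' hS = m + k - 1 :=
      (S.max'_eq_iff hS _).mpr ⟨by simp [hm]; omega, fun b hb ↦ (mem_Icc.mp (hm ▸ hb)).2⟩
    have hmin : S.min' hS = m :=
      (S.min'_eq_iff hS _).mpr ⟨by simp [hm]; omega, fun b hb ↦ (mem_Icc.mp (hm ▸ hb)).1⟩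
    omega

end Finset

section Schedule

variable {D C : Type*} {q : Finset D} {c : D → C} {p : D → ℕ}

theorem channel_eq_of_abs_sub_le_one
    (hcf : ∀ d ∈ q, ∀ d' ∈ q, d ≠ d' → c d ≠ c d' → |(p d : ℤ) - (p d' : ℤ)| > 1)
    {d d' : D} (hd : d ∈ q) (hd' : d' ∈ q) (hdist : |(p d : ℤ) - (p d' : ℤ)| ≤ 1) :
    c d = c d' := by
  by_contra hc
  have hne : d ≠ d' := by rintro rfl; exact hc rfl
  exact (hcf d hd d' hd' hne hc).not_ge hdist

theorem injOn_of_conflictFree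
    (hone : ∀ d ∈ q, ∀ d' ∈ q, c d = c d' → p d = p d' → d = d')
    (hcf : ∀ d ∈ q, ∀ d' ∈ q, d ≠ d' → c d ≠ c d' → |(p d : ℤ) - (p d' : ℤ)| > 1) :
    Set.InjOn p q := fun d hd d' hd' hp ↦
  hone d hd d' hd' (channel_eq_of_abs_sub_le_one hcf hd hd' (by simp [hp])) hp

theorem channel_eq_of_image_eq_Icc {m n : ℕ} (himage : q.image p = Finset.Icc m n)
    (hlink : ∀ d ∈ q, ∀ d' ∈ q, |(p d : ℤ) - (p d' : ℤ)| ≤ 1 → c d = c d') :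
    ∀ d ∈ q, ∀ d' ∈ q, c d = c d' := by
  have hslot : ∀ s, s ∈ Finset.Icc m n → ∃ d ∈ q, p d = s := fun s hs ↦
    Finset.mem_image.mp (himage ▸ hs)
  have hbounds : ∀ d ∈ q, m ≤ p d ∧ p d ≤ n := fun d hd ↦
    Finset.mem_Icc.mp (himage ▸ Finset.mem_image_of_mem p hd)
  intro d hd d' hd'
  obtain ⟨d₀, hd₀, hpd₀⟩ :=
    hslot m (Finset.mem_Icc.mpr ⟨le_rfl, (hbounds d hd).1.trans (hbounds d hd).2⟩)
  suffices h : ∀ s ≥ m, ∀ e ∈ q, p e = s → c e = c d₀ by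
    rw [h _ (hbounds d hd).1 d hd rfl, h _ (hbounds d' hd').1 d' hd' rfl]
  intro s hs
  induction s, hs using Nat.le_induction with
  | base => exact fun e he hpe ↦ hlink e he d₀ hd₀ (by simp [hpe, hpd₀])
  | succ s hs ih =>
    intro e he hpe
    obtain ⟨e', he', hpe'⟩ :=
      hslot s (Finset.mem_Icc.mpr ⟨hs, by have := (hbounds e he).2; omega⟩)
    rw [hlink e he e' he' (by simp [hpe, hpe']), ih e' he' hpe']

end Schedule

/-- For a query `q` with `k ≥ 2` distinct data items in a conflict-free broadcast
schedule, `acc(q) = k - 1` iff all `k` items of `q` are placed on a single channel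
in `k` consecutive slots `m, m+1, …, m+k-1`. -/
theorem accessTime_eq_card_sub_one_iff {D C : Type*} (q : Finset D)
    (hq : 2 ≤ q.card)
    (c : D → C) (p : D → ℕ)
    (hone : ∀ d ∈ q, ∀ d' ∈ q, c d = c d' → p d = p d' → d = d')
    (hcf : ∀ d ∈ q, ∀ d' ∈ q, d ≠ d' → c d ≠ c d' → |(p d : ℤ) - (p d' : ℤ)| > 1) :
    accessTime p q (Finset.card_pos.mp (by omega)) = q.card - 1 ↔
      ∃ (ch : C) (m : ℕ), (∀ d ∈ q, c d = ch) ∧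
        q.image p = Finset.Icc m (m + q.card - 1) := by
  have hq_ne : q.Nonempty := Finset.card_pos.mp (by omega)
  have hcard : (q.image p).card = q.card :=
    Finset.card_image_of_injOn (injOn_of_conflictFree hone hcf)
  have hinterval := (q.image p).max'_sub_min'_eq_card_sub_one_iff (hq_ne.image p)
  rw [hcard] at hinterval
  unfold accessTime
  rw [hinterval]
  constructor
  · rintro ⟨m, himage⟩
    obtain ⟨d₀, hd₀⟩ := hq_ne
    have hlink := fun d hd d' hd' ↦ channel_eq_of_abs_sub_le_one (d := d) (d' := d') hcf hd hd'
    exact ⟨c d₀, m, fun d hd ↦ channel_eq_of_image_eq_Icc himage hlink d hd d₀ hd₀, himage⟩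
  · rintro ⟨-, m, -, himage⟩
    exact ⟨m, himage⟩
end

section
/- (Forward direction of the reduction from MMUOS to CDBMLρ, used in Theorem 1) Let there be m machines and n jobs, where job i consists of m unit operations o_i^1, …, o_i^m and operation o_i^j must run on machine j, and let t(i, j) ∈ ℕ be a unit-time open-shop schedule: for each fixed machine j the times t(1, j), …, t(n, j) are pairwise distinct, and for each fixed job i the times t(i, 1), …, t(i, m) are pairwise distinct. Define a broadcast schedule on m channels that places the data item corresponding to operation o_i^j on channel j at slot p(i, j) = 3·t(i, j). Then: (1) at most one data item occupies any (channel, slot) pair; (2) the schedule is conflict-free for every request q_i = {o_i^1, …, o_i^m}, i.e., for j ≠ j′, |p(i, j) − p(i, j′)| > 1; and (3) for every i, acc(q_i) = 3·C_i, where C_i = max_j t(i, j) − min_j t(i, j) is the flow time of job i. -/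
/-- The spread (max minus min) of a function `f : Fin m → ℕ`, for `m > 0`.
Used both for the flow time of a job (finish time minus release time) and for
the access time of a request (max slot minus min slot). -/
def spread {m : ℕ} (hm : 0 < m) (f : Fin m → ℕ) : ℕ :=
  (Finset.univ.image f).max' ((Finset.univ_nonempty_iff.mpr ⟨⟨0, hm⟩⟩).image f) -
  (Finset.univ.image f).min' ((Finset.univ_nonempty_iff.mpr ⟨⟨0, hm⟩⟩).image f)

theorem spread_const_mul {m : ℕ} (hm : 0 < m) (c : ℕ) (f : Fin m → ℕ) :
    spread hm (fun j => c * f j) = c * spread hm f := by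
  have hmono : Monotone (c * · : ℕ → ℕ) := fun _ _ h => Nat.mul_le_mul_left c h
  have himage : Finset.univ.image (fun j => c * f j) = (Finset.univ.image f).image (c * ·) := by
    rw [Finset.image_image]; rfl
  simp only [spread, himage, Finset.max'_image hmono, Finset.min'_image hmono, Nat.mul_sub]

theorem one_lt_abs_mul_sub_mul {c a b : ℕ} (hc : 2 ≤ c) (hab : a ≠ b) :
    1 < |((c * a : ℕ) : ℤ) - (c * b : ℕ)| := by
  rw [lt_abs]
  push_cast
  rcases Nat.lt_or_gt_of_ne hab with h | h
  · right; nlinarith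
  · left; nlinarith

/-- (Forward direction of the reduction from MMUOS to CDBMLρ.) Given a
unit-time open-shop schedule `t` for `n` jobs on `m` machines (no machine runs
two operations at the same time; no job has two operations at the same time),
the broadcast schedule placing the item of operation `o i j` on channel `j` at
slot `p i j = 3 * t i j` has at most one item per (channel, slot) pair, is
conflict-free for every request `q i = {o i 1, …, o i m}`, and satisfies
`acc(q i) = 3 * C i` where `C i` is the flow time of job `i`. -/
theorem mmuos_to_cdbml_forward {n m : ℕ} (hm : 0 < m)
    (t : Fin n → Fin m → ℕ)
    (hmach : ∀ j, ∀ i i' : Fin n, t i j = t i' j → i = i')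
    (hjob : ∀ i : Fin n, ∀ j j' : Fin m, t i j = t i j' → j = j')
    (p : Fin n → Fin m → ℕ) (hp : ∀ i j, p i j = 3 * t i j) :
    (∀ j, ∀ i i' : Fin n, p i j = p i' j → i = i') ∧
    (∀ i : Fin n, ∀ j j' : Fin m, j ≠ j' → |(p i j : ℤ) - (p i j' : ℤ)| > 1) ∧
    (∀ i : Fin n, spread hm (p i) = 3 * spread hm (t i)) := by
  refine ⟨fun j i i' h => ?_, fun i j j' hjj => ?_, fun i => ?_⟩
  · exact hmach j i i' (by rw [hp, hp] at h; omega)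
  · simpa only [hp] using one_lt_abs_mul_sub_mul (by norm_num : 2 ≤ 3) (mt (hjob i j j') hjj)
  · rw [show p i = fun j => 3 * t i j from funext (hp i)]
    exact spread_const_mul hm 3 (t i)
end

section
/- (Backward direction of the reduction from MMUOS to CDBMLρ, used in Theorem 1) Let there be n requests q_1, …, q_n, each consisting of m distinct data items with the j-th item of request i placed on channel j at slot p(i, j), with at most one data item per (channel, slot) pair, and suppose the schedule is conflict-free for every request (for j ≠ j′, |p(i, j) − p(i, j′)| > 1). Then t(i, j) := p(i, j) is a valid unit-time open-shop schedule for n jobs on m machines: for each fixed machine j the times t(1, j), …, t(n, j) are pairwise distinct, for each fixed job i the times t(i, 1), …, t(i, m) are pairwise distinct, and the flow time C_i = max_j t(i, j) − min_j t(i, j) of job i equals the access time acc(q_i) of request i. -/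
theorem injective_of_one_lt_abs_sub {α : Type*} {f : α → ℕ}
    (h : ∀ j j', j ≠ j' → |(f j : ℤ) - (f j' : ℤ)| > 1) : Function.Injective f := by
  intro j j' hjj'
  by_contra hne
  simpa [hjj'] using h j j' hne

/-- (Backward direction of the reduction from MMUOS to CDBMLρ.) Given a
conflict-free broadcast schedule for `n` requests of `m` items each, with the
`j`-th item of request `i` on channel `j` at slot `p i j` and at most one item
per (channel, slot) pair, setting `t i j := p i j` yields a valid unit-time
open-shop schedule: on each machine the job times are pairwise distinct, within
each job the operation times are pairwise distinct, and the flow time of each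
job equals the access time of the corresponding request. -/
theorem cdbml_to_mmuos_backward {n m : ℕ} (hm : 0 < m)
    (p : Fin n → Fin m → ℕ)
    (hone : ∀ j, ∀ i i' : Fin n, p i j = p i' j → i = i')
    (hcf : ∀ i : Fin n, ∀ j j' : Fin m, j ≠ j' → |(p i j : ℤ) - (p i j' : ℤ)| > 1)
    (t : Fin n → Fin m → ℕ) (ht : ∀ i j, t i j = p i j) :
    (∀ j, ∀ i i' : Fin n, t i j = t i' j → i = i') ∧
    (∀ i : Fin n, ∀ j j' : Fin m, t i j = t i j' → j = j') ∧
    (∀ i : Fin n, spread hm (t i) = spread hm (p i)) := by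
  obtain rfl : t = p := funext₂ ht
  exact ⟨hone, fun i => injective_of_one_lt_abs_sub (hcf i), fun _ => rfl⟩
end
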